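/- Every subnormalized complex square matrix is the average of two unitaries: for any matrix M with ‖M‖∞ ≤ 1 over a finite index type, there exist unitary matrices U₁ and U₂ of the same size such that M = (U₁ + U₂)/2. -/

import Mathlib

noncomputable section

open scoped Matrix Kronecker ComplexOrder

/-- The positive semidefinite square root of a matrix (defaults to `0` if not PSD). -/
noncomputable def matSqrt {n : Type*} [Fintype n] [DecidableEq n] (M : Matrix n n ℂ) :
    Matrix n n ℂ :=
  open scoped Classical in
  if h : M.PosSemidef then (h.1.eigenvectorUnitary : Matrix n n ℂ) *
    Matrix.diagonal (((↑) : ℝ → ℂ) ∘ Real.sqrt ∘ h.1.eigenvalues) *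
    (star h.1.eigenvectorUnitary : Matrix n n ℂ) else 0

/-- The fidelity `F(ρ, σ) = tr √(√ρ σ √ρ)` of two PSD matrices. -/
noncomputable def fidelity {n : Type*} [Fintype n] [DecidableEq n] (ρ σ : Matrix n n ℂ) : ℝ :=
  (matSqrt (matSqrt ρ * σ * matSqrt ρ)).trace.re

/-- The ℓ²→ℓ² operator norm of a complex matrix. -/
noncomputable def opNorm {m n : Type*} [Fintype m] [Fintype n] [DecidableEq n]
    (M : Matrix m n ℂ) : ℝ :=
  ‖(Matrix.toEuclideanLin.trans LinearMap.toContinuousLinearMap) M‖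

/-- Partial trace over the second tensor factor. -/
noncomputable def ptraceB {A B : Type*} [Fintype B]
    (ρ : Matrix (A × B) (A × B) ℂ) : Matrix A A ℂ :=
  Matrix.of fun a a' => ∑ b : B, ρ (a, b) (a', b)

/-!
Polar decomposition: the map `|M| x ↦ M x` is a well-defined isometry on the range of
`|M| = √(M⋆M)`, and in finite dimensions it extends to a unitary `U`, so `M = U |M|`.
As `‖|M|‖ = ‖M‖ ≤ 1`, the self-adjoint contraction `|M|` is the real part of the unitary
`v = |M| + i √(1 - |M|²)`, whence `M = (U v + U v⋆) / 2`.
-/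

open scoped InnerProductSpace Matrix.Norms.L2Operator MatrixOrder

section LinearIsometry

variable {𝕜 E F : Type*} [RCLike 𝕜] [NormedAddCommGroup E] [InnerProductSpace 𝕜 E]
  [FiniteDimensional 𝕜 E] [AddCommGroup F] [Module 𝕜 F]

theorem LinearMap.exists_linearIsometryEquiv_comp_eq_of_norm_apply_eq {A B : F →ₗ[𝕜] E}
    (h : ∀ x, ‖A x‖ = ‖B x‖) : ∃ u : E ≃ₗᵢ[𝕜] E, A = u.toLinearMap ∘ₗ B := by
  have hker : LinearMap.ker B ≤ LinearMap.ker A := fun x hx => by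
    simpa [← norm_eq_zero, h] using hx
  let L : LinearMap.range B →ₗ[𝕜] E :=
    (LinearMap.ker B).liftQ A hker ∘ₗ B.quotKerEquivRange.symm
  have hL (x : F) : L ⟨B x, LinearMap.mem_range_self B x⟩ = A x := by
    simp only [L, LinearMap.coe_comp, LinearEquiv.coe_coe, Function.comp_apply,
      LinearMap.quotKerEquivRange_symm_apply_image, Submodule.mkQ_apply, Submodule.liftQ_apply]
  let L' : LinearMap.range B →ₗᵢ[𝕜] E :=
    { L with
      norm_map' := by
        rintro ⟨_, x, rfl⟩
        exact (congrArg norm (hL x)).trans (h x) }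
  refine ⟨L'.extend.toLinearIsometryEquiv rfl, LinearMap.ext fun x => ?_⟩
  exact ((L'.extend_apply ⟨B x, LinearMap.mem_range_self B x⟩).trans (hL x)).symm

end LinearIsometry

theorem IsSelfAdjoint.exists_mem_unitary_eq_half_smul_add_star {A : Type*} [CStarAlgebra A]
    [PartialOrder A] [StarOrderedRing A] {a : A} (ha : IsSelfAdjoint a) (h : ‖a‖ ≤ 1) :
    ∃ v ∈ unitary A, a = (1 / 2 : ℂ) • (v + star v) := by
  set v := selfAdjoint.unitarySelfAddISMul ⟨a, ha⟩ h
  refine ⟨v, v.2, ?_⟩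
  have hre : (2⁻¹ : ℝ) • ((v : A) + star (v : A)) = a := by
    rw [← realPart_apply_coe, selfAdjoint.realPart_unitarySelfAddISMul ⟨a, ha⟩ h]
  rw [← hre, ← Complex.coe_smul]
  norm_num

namespace Matrix

variable {n : Type*} [Fintype n] [DecidableEq n]

theorem exists_mem_unitaryGroup_eq_mul_of_star_mul_self_eq {𝕜 : Type*} [RCLike 𝕜]
    {A B : Matrix n n 𝕜} (h : star A * A = star B * B) :
    ∃ U ∈ unitaryGroup n 𝕜, A = U * B := by
  let T := toEuclideanCLM (n := n) (𝕜 := 𝕜)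
  have hnorm (x : EuclideanSpace 𝕜 n) : ‖T A x‖ = ‖T B x‖ := by
    have hsq (C : Matrix n n 𝕜) : ‖T C x‖ ^ 2 = RCLike.re ⟪T (star C * C) x, x⟫_𝕜 := by
      rw [map_mul, map_star]
      exact (T C).apply_norm_sq_eq_inner_adjoint_left x
    rw [← sq_eq_sq₀ (norm_nonneg _) (norm_nonneg _), hsq, hsq, h]
  obtain ⟨u, hu⟩ := LinearMap.exists_linearIsometryEquiv_comp_eq_of_norm_apply_eq
    (A := (T A).toLinearMap) (B := (T B).toLinearMap) hnorm
  refine ⟨T.symm (Unitary.linearIsometryEquiv.symm u),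
    Unitary.map_mem _ (Unitary.linearIsometryEquiv.symm u).2, T.injective ?_⟩
  change T A = T (T.symm _ * B)
  rw [map_mul, StarAlgEquiv.apply_symm_apply]
  ext1 x
  exact LinearMap.congr_fun hu x

theorem exists_mem_unitaryGroup_eq_mul_abs (M : Matrix n n ℂ) :
    ∃ U ∈ unitaryGroup n ℂ, M = U * CFC.abs M :=
  exists_mem_unitaryGroup_eq_mul_of_star_mul_self_eq <| by
    rw [(CFC.abs_nonneg M).isSelfAdjoint.star_eq, CFC.abs_mul_abs]

end Matrix

/-- **Lemma (subnormalized matrices are averages of two unitaries)**. -/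
theorem subnormalized_avg_of_two_unitaries
    {n : Type*} [Fintype n] [DecidableEq n]
    (M : Matrix n n ℂ) (hM : opNorm M ≤ 1) :
    ∃ U₁ U₂ : Matrix n n ℂ,
      U₁ ∈ Matrix.unitaryGroup n ℂ ∧ U₂ ∈ Matrix.unitaryGroup n ℂ ∧
      M = ((1 : ℂ) / 2) • (U₁ + U₂) := by
  obtain ⟨U, hU, hMU⟩ := M.exists_mem_unitaryGroup_eq_mul_abs
  have habs : ‖CFC.abs M‖ ≤ 1 := CFC.norm_abs.trans_le hM
  obtain ⟨v, hv, habsv⟩ :=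
    (CFC.abs_nonneg M).isSelfAdjoint.exists_mem_unitary_eq_half_smul_add_star habs
  refine ⟨U * v, U * star v, mul_mem hU hv, mul_mem hU (Unitary.star_mem hv), ?_⟩
  rw [hMU, habsv, mul_smul_comm, mul_add]
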